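/- arXiv:1009.1023 — 4 statements merged into one kernel-verified Lean document; each statement's English description precedes it below -/
import Mathlib

section
/- Let n ≥ 1, let F : (Fin n → ℝ) × ℝ → ℝ be differentiable, let w : (Fin n → ℝ) × ℝ → (Fin n → ℝ) × ℝ be a vector field which is a symmetry of F, i.e. the directional derivative of F along w vanishes at every point: ⟪w(p), ∇F(p)⟫ = 0 for all p. Let h : (Fin n → ℝ) → ℝ be differentiable, and define the gauge-fixing function G(x, φ) = h(x) − φ. Assume that at every point of the constraint surface the symmetry direction is transverse to the gauge fixing: for all x, ⟪w(x, h(x)), ∇G(x, h(x))⟫ ≠ 0. Then for every x₀, x₀ is a critical point of the substituted (gauge-fixed) function x ↦ F(x, h(x)) (i.e. its Fréchet derivative at x₀ vanishes) if and only if ∇F(x₀, h(x₀)) = 0, i.e. (x₀, h(x₀)) is an unconstrained critical point of F with G(x₀, h(x₀)) = 0. -/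
/-!
At `p = (x₀, h x₀)` the symmetry says that `dF p` kills `w p`, and stationarity of the
substituted function says that `dF p` kills the tangent space of the constraint surface,
the graph of `dh x₀`. That graph is a hyperplane of `(Fin n → ℝ) × ℝ`, and transversality of
the gauge fixing says exactly that `w p` lies off it, so together they span the whole space.
-/

namespace LinearMap

variable {𝕜 E M : Type*} [Field 𝕜] [AddCommGroup E] [Module 𝕜 E] [AddCommGroup M] [Module 𝕜 M]
  {L : E × 𝕜 →ₗ[𝕜] M} {A : E →ₗ[𝕜] 𝕜}

theorem apply_eq_smul_of_graph_le_ker (hL : A.graph ≤ ker L) (q : E × 𝕜) :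
    L q = (q.2 - A q.1) • L (0, 1) := by
  have hq : q = (q.1, A q.1) + (q.2 - A q.1) • ((0 : E), (1 : 𝕜)) := by
    ext <;> simp
  have hgraph : L (q.1, A q.1) = 0 := hL ((mem_graph_iff A _).2 rfl)
  conv_lhs => rw [hq, map_add, map_smul, hgraph, zero_add]

theorem eq_zero_of_graph_le_ker (hL : A.graph ≤ ker L) {w : E × 𝕜} (hw : w ∈ ker L)
    (hwA : w ∉ A.graph) : L = 0 := by
  have hw' : (w.2 - A w.1) • L (0, 1) = 0 := (apply_eq_smul_of_graph_le_ker hL w).symm.trans hw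
  have hwA' : w.2 - A w.1 ≠ 0 := sub_ne_zero.2 fun hw2 => hwA ((mem_graph_iff A w).2 hw2)
  have h01 : L (0, 1) = 0 := (smul_eq_zero.1 hw').resolve_left hwA'
  refine LinearMap.ext fun q => ?_
  rw [apply_eq_smul_of_graph_le_ker hL, h01, smul_zero, zero_apply]

end LinearMap

section Calculus

variable {𝕜 E : Type*} [NontriviallyNormedField 𝕜] [NormedAddCommGroup E] [NormedSpace 𝕜 E]

theorem HasFDerivAt.comp_id_prod {N M : Type*} [NormedAddCommGroup N] [NormedSpace 𝕜 N]
    [NormedAddCommGroup M] [NormedSpace 𝕜 M] {F : E × N → M} {h : E → N} {x : E}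
    (hF : DifferentiableAt 𝕜 F (x, h x)) (hh : DifferentiableAt 𝕜 h x) :
    HasFDerivAt (fun x => F (x, h x))
      ((fderiv 𝕜 F (x, h x)).comp ((ContinuousLinearMap.id 𝕜 E).prod (fderiv 𝕜 h x))) x :=
  hF.hasFDerivAt.comp x ((hasFDerivAt_id x).prodMk hh.hasFDerivAt)

theorem fderiv_fst_sub_snd_apply {h : E → 𝕜} {x : E} (y : 𝕜) (hh : DifferentiableAt 𝕜 h x)
    (u : E × 𝕜) :
    fderiv 𝕜 (fun p : E × 𝕜 => h p.1 - p.2) (x, y) u = fderiv 𝕜 h x u.1 - u.2 := by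
  have hG : HasFDerivAt (fun p : E × 𝕜 => h p.1 - p.2)
      ((fderiv 𝕜 h x).comp (ContinuousLinearMap.fst 𝕜 E 𝕜) - ContinuousLinearMap.snd 𝕜 E 𝕜)
      (x, y) :=
    (hh.hasFDerivAt.comp (x, y) hasFDerivAt_fst).sub hasFDerivAt_snd
  rw [hG.fderiv]
  rfl

end Calculus

theorem gauge_fix_before_or_after_variation_general
    (n : ℕ)
    (F : ((Fin n → ℝ) × ℝ) → ℝ) (hF : Differentiable ℝ F)
    (w : ((Fin n → ℝ) × ℝ) → ((Fin n → ℝ) × ℝ))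
    (hsym : ∀ p, fderiv ℝ F p (w p) = 0)
    (h : (Fin n → ℝ) → ℝ) (hh : Differentiable ℝ h)
    (G : ((Fin n → ℝ) × ℝ) → ℝ) (hG : G = fun p => h p.1 - p.2)
    (htrans : ∀ x : Fin n → ℝ, fderiv ℝ G (x, h x) (w (x, h x)) ≠ 0)
    (x₀ : Fin n → ℝ) :
    fderiv ℝ (fun x => F (x, h x)) x₀ = 0 ↔ fderiv ℝ F (x₀, h x₀) = 0 := by
  subst hG
  rw [(HasFDerivAt.comp_id_prod (hF _) (hh x₀)).fderiv]
  refine ⟨fun hcrit => ?_, fun hcrit => by rw [hcrit, ContinuousLinearMap.zero_comp]⟩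
  have hgraph : (fderiv ℝ h x₀ : (Fin n → ℝ) →ₗ[ℝ] ℝ).graph ≤
      LinearMap.ker (fderiv ℝ F (x₀, h x₀) : (Fin n → ℝ) × ℝ →ₗ[ℝ] ℝ) := by
    rw [LinearMap.graph_eq_range_prod, LinearMap.range_le_ker_iff]
    exact congrArg ContinuousLinearMap.toLinearMap hcrit
  have hwA : w (x₀, h x₀) ∉ (fderiv ℝ h x₀ : (Fin n → ℝ) →ₗ[ℝ] ℝ).graph := by
    rw [LinearMap.mem_graph_iff, eq_comm, ← sub_eq_zero]
    simpa only [ContinuousLinearMap.coe_coe, fderiv_fst_sub_snd_apply _ (hh x₀)] using htrans x₀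
  exact ContinuousLinearMap.coe_injective (LinearMap.eq_zero_of_graph_le_ker hgraph (hsym _) hwA)

/-- Finite-dimensional core of the paper's theorem: let `F` be a differentiable
"action" on `(Fin n → ℝ) × ℝ` with a symmetry vector field `w` (the directional
derivative of `F` along `w`, i.e. `⟪w(p), ∇F(p)⟫`, vanishes everywhere), and let
`G(x, φ) = h(x) - φ` be a derivative-free gauge fixing whose gradient is nowhere
orthogonal to the symmetry direction on the constraint surface (i.e.
`⟪w(x, h(x)), ∇G(x, h(x))⟫ ≠ 0` for all `x`). Then `x₀` is a critical point of
the gauge-fixed (substituted) function `x ↦ F(x, h(x))` if and only if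
`(x₀, h(x₀))` is an unconstrained critical point of `F` (i.e. `∇F(x₀, h(x₀)) = 0`,
equivalently the Fréchet derivative of `F` vanishes there), a point which
automatically satisfies `G(x₀, h(x₀)) = 0`. -/
theorem gauge_fix_before_or_after_variation
    (n : ℕ) (hn : 1 ≤ n)
    (F : ((Fin n → ℝ) × ℝ) → ℝ) (hF : Differentiable ℝ F)
    (w : ((Fin n → ℝ) × ℝ) → ((Fin n → ℝ) × ℝ))
    (hsym : ∀ p, fderiv ℝ F p (w p) = 0)
    (h : (Fin n → ℝ) → ℝ) (hh : Differentiable ℝ h)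
    (G : ((Fin n → ℝ) × ℝ) → ℝ) (hG : G = fun p => h p.1 - p.2)
    (htrans : ∀ x : Fin n → ℝ, fderiv ℝ G (x, h x) (w (x, h x)) ≠ 0)
    (x₀ : Fin n → ℝ) :
    fderiv ℝ (fun x => F (x, h x)) x₀ = 0 ↔ fderiv ℝ F (x₀, h x₀) = 0 :=
  gauge_fix_before_or_after_variation_general n F hF w hsym h hh G hG htrans x₀
end

section
/- Let n, m ≥ 1, let F : (Fin n → ℝ) × (Fin m → ℝ) → ℝ be differentiable and let h : (Fin n → ℝ) → (Fin m → ℝ) be differentiable. For x₀ ∈ (Fin n → ℝ), the following are equivalent: (1) x₀ is a critical point of the substituted function x ↦ F(x, h(x)), i.e. its Fréchet derivative at x₀ vanishes; (2) there exists λ ∈ (Fin m → ℝ) such that (x₀, h(x₀), λ) is a critical point of the extended function (x, y, λ) ↦ F(x, y) + ⟪λ, h(x) − y⟫, i.e. the Fréchet derivative of the extended function vanishes at (x₀, h(x₀), λ). -/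
/-!
At `(x₀, h x₀, λ)` the derivative of the extended function is
`(u, v, w) ↦ L (u, v) + ⟪λ, D u - v⟫`, where `L = F'(x₀, h x₀)` and `D = h'(x₀)`; the `w`-direction
drops out because the constraint `h x - y` vanishes there. This functional vanishes iff `λ`
represents `v ↦ L (0, v)` (test `(0, v, 0)`) and `L (u, D u) = 0` (test `(u, D u, 0)`), the latter
being the chain-rule derivative of `x ↦ F (x, h x)`. By the Riesz representation theorem such a `λ`
always exists, so the only remaining condition is criticality of the substituted function.
-/

open InnerProductSpace

open ContinuousLinearMap

section Lagrangian

variable {E Y : Type*} [NormedAddCommGroup E] [NormedSpace ℝ E]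
  [NormedAddCommGroup Y] [InnerProductSpace ℝ Y]

def lagrangian (F : E × Y → ℝ) (h : E → Y) (p : E × Y × Y) : ℝ :=
  F (p.1, p.2.1) + ⟪p.2.2, h p.1 - p.2.1⟫_ℝ

noncomputable def lagrangianFDeriv (L : E × Y →L[ℝ] ℝ) (D : E →L[ℝ] Y) (lam : Y) : E × Y × Y →L[ℝ] ℝ :=
  L.comp ((fst ℝ E (Y × Y)).prod ((fst ℝ Y Y).comp (snd ℝ E (Y × Y)))) +
    (innerSL ℝ lam).comp (D.comp (fst ℝ E (Y × Y)) - (fst ℝ Y Y).comp (snd ℝ E (Y × Y)))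

@[simp]
theorem lagrangianFDeriv_apply (L : E × Y →L[ℝ] ℝ) (D : E →L[ℝ] Y) (lam : Y) (p : E × Y × Y) :
    lagrangianFDeriv L D lam p = L (p.1, p.2.1) + ⟪lam, D p.1 - p.2.1⟫_ℝ :=
  rfl

theorem hasFDerivAt_lagrangian {F : E × Y → ℝ} {h : E → Y} {L : E × Y →L[ℝ] ℝ} {D : E →L[ℝ] Y}
    {x₀ : E} (hF : HasFDerivAt F L (x₀, h x₀)) (hh : HasFDerivAt h D x₀) (lam : Y) :
    HasFDerivAt (lagrangian F h) (lagrangianFDeriv L D lam) (x₀, h x₀, lam) := by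
  have hx : HasFDerivAt (fun p : E × Y × Y => p.1) (fst ℝ E (Y × Y)) (x₀, h x₀, lam) :=
    hasFDerivAt_fst
  have hy : HasFDerivAt (fun p : E × Y × Y => p.2.1)
      ((fst ℝ Y Y).comp (snd ℝ E (Y × Y))) (x₀, h x₀, lam) :=
    hasFDerivAt_fst.comp _ hasFDerivAt_snd
  have hlam : HasFDerivAt (fun p : E × Y × Y => p.2.2)
      ((snd ℝ Y Y).comp (snd ℝ E (Y × Y))) (x₀, h x₀, lam) :=
    hasFDerivAt_snd.comp _ hasFDerivAt_snd
  have hconstraint := (hh.comp _ hx).sub hy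
  refine ((hF.comp (x₀, h x₀, lam) (hx.prodMk hy)).add (hlam.inner ℝ hconstraint)).congr_fderiv ?_
  ext p <;> simp [lagrangianFDeriv]

theorem lagrangianFDeriv_eq_zero_iff (L : E × Y →L[ℝ] ℝ) (D : E →L[ℝ] Y) (lam : Y) :
    lagrangianFDeriv L D lam = 0 ↔
      L.comp ((ContinuousLinearMap.id ℝ E).prod D) = 0 ∧ L.comp (inr ℝ E Y) = innerSL ℝ lam := by
  constructor
  · intro hcrit
    constructor
    · ext u
      simpa using DFunLike.congr_fun hcrit (u, D u, 0)
    · ext v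
      simpa [← sub_eq_add_neg, sub_eq_zero] using DFunLike.congr_fun hcrit (0, v, 0)
  · rintro ⟨hrestricted, hmultiplier⟩
    refine ContinuousLinearMap.ext fun ⟨u, v, _⟩ => ?_
    have hsplit : L (u, v) + L (0, D u - v) = L (u, D u) := by
      rw [← map_add, Prod.mk_add_mk, add_zero, add_sub_cancel]
    have hu : L (u, D u) = 0 := by simpa using DFunLike.congr_fun hrestricted u
    have hv : L (0, D u - v) = ⟪lam, D u - v⟫_ℝ := DFunLike.congr_fun hmultiplier (D u - v)
    simp [← hv, hsplit, hu]

theorem exists_lagrangianFDeriv_eq_zero_iff [CompleteSpace Y] (L : E × Y →L[ℝ] ℝ)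
    (D : E →L[ℝ] Y) :
    (∃ lam, lagrangianFDeriv L D lam = 0) ↔ L.comp ((ContinuousLinearMap.id ℝ E).prod D) = 0 := by
  simp only [lagrangianFDeriv_eq_zero_iff]
  refine ⟨fun ⟨_, hrestricted, _⟩ => hrestricted, fun hrestricted => ?_⟩
  refine ⟨(toDual ℝ Y).symm (L.comp (inr ℝ E Y)), hrestricted, ?_⟩
  ext v
  simp [toDual_symm_apply]

end Lagrangian

theorem restricted_iff_lagrange_multiplier_general
    (n m : ℕ)
    (F : (EuclideanSpace ℝ (Fin n) × EuclideanSpace ℝ (Fin m)) → ℝ)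
    (hF : Differentiable ℝ F)
    (h : EuclideanSpace ℝ (Fin n) → EuclideanSpace ℝ (Fin m))
    (hh : Differentiable ℝ h)
    (x₀ : EuclideanSpace ℝ (Fin n)) :
    fderiv ℝ (fun x => F (x, h x)) x₀ = 0 ↔
      ∃ lam : EuclideanSpace ℝ (Fin m),
        fderiv ℝ
          (fun p : EuclideanSpace ℝ (Fin n) × EuclideanSpace ℝ (Fin m) ×
              EuclideanSpace ℝ (Fin m) =>
            F (p.1, p.2.1) + ⟪p.2.2, h p.1 - p.2.1⟫_ℝ)
          (x₀, h x₀, lam) = 0 := by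
  have hF₀ := (hF (x₀, h x₀)).hasFDerivAt
  have hh₀ := (hh x₀).hasFDerivAt
  have hrestricted : HasFDerivAt (fun x => F (x, h x))
      (fderiv ℝ F (x₀, h x₀) |>.comp ((ContinuousLinearMap.id ℝ _).prod (fderiv ℝ h x₀))) x₀ :=
    hF₀.comp x₀ ((hasFDerivAt_id x₀).prodMk hh₀)
  change _ ↔ ∃ lam, fderiv ℝ (lagrangian F h) (x₀, h x₀, lam) = 0
  simp only [hrestricted.fderiv, (hasFDerivAt_lagrangian hF₀ hh₀ _).fderiv]
  exact (exists_lagrangianFDeriv_eq_zero_iff _ _).symm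

/-- Finite-dimensional form of the paper's first Lemma: `x₀` is a critical point
of the substituted ("restricted") function `x ↦ F(x, h(x))` if and only if there
is a Lagrange multiplier `λ` such that `(x₀, h(x₀), λ)` is a critical point of the
extended function `(x, y, λ) ↦ F(x, y) + ⟪λ, h(x) - y⟫`. -/
theorem restricted_iff_lagrange_multiplier
    (n m : ℕ) (hn : 1 ≤ n) (hm : 1 ≤ m)
    (F : (EuclideanSpace ℝ (Fin n) × EuclideanSpace ℝ (Fin m)) → ℝ)
    (hF : Differentiable ℝ F)
    (h : EuclideanSpace ℝ (Fin n) → EuclideanSpace ℝ (Fin m))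
    (hh : Differentiable ℝ h)
    (x₀ : EuclideanSpace ℝ (Fin n)) :
    fderiv ℝ (fun x => F (x, h x)) x₀ = 0 ↔
      ∃ lam : EuclideanSpace ℝ (Fin m),
        fderiv ℝ
          (fun p : EuclideanSpace ℝ (Fin n) × EuclideanSpace ℝ (Fin m) ×
              EuclideanSpace ℝ (Fin m) =>
            F (p.1, p.2.1) + ⟪p.2.2, h p.1 - p.2.1⟫_ℝ)
          (x₀, h x₀, lam) = 0 :=
  restricted_iff_lagrange_multiplier_general n m F hF h hh x₀
end

section
/- Let n ≥ 1, let V, f : (Fin n → ℝ) → ℝ be differentiable, and let ξ : (Fin n → ℝ) → (Fin n → ℝ) be a vector field such that ⟪ξ(x), ∇V(x)⟫ = 0 for all x (a global symmetry of V) and ⟪ξ(x), ∇f(x)⟫ ≠ 0 for every x with f(x) = 0 (the symmetry is transverse to the gauge-fixing surface). Then the set of constrained critical points equals the set of unconstrained critical points on the constraint surface: { x | f(x) = 0 ∧ ∃ λ ∈ ℝ, ∇V(x) + λ ∇f(x) = 0 } = { x | f(x) = 0 ∧ ∇V(x) = 0 }. -/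
open Gradient InnerProductSpace

/-- The paper's general rule, in finite dimensions: if the vector field `ξ` is a
global symmetry of `V` (i.e. `⟪ξ(x), ∇V(x)⟫ = 0` for all `x`) and is transverse to
the gauge-fixing surface `f = 0` (i.e. `⟪ξ(x), ∇f(x)⟫ ≠ 0` whenever `f(x) = 0`),
then the set of constrained (Lagrange-multiplier) critical points of `V` subject to
`f = 0` coincides with the set of unconstrained critical points of `V` lying on the
surface `f = 0`. -/
theorem constrained_eq_unconstrained_critical_points
    (n : ℕ) (hn : 1 ≤ n)
    (V f : EuclideanSpace ℝ (Fin n) → ℝ)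
    (hV : Differentiable ℝ V) (hf : Differentiable ℝ f)
    (ξ : EuclideanSpace ℝ (Fin n) → EuclideanSpace ℝ (Fin n))
    (hsym : ∀ x, ⟪ξ x, ∇ V x⟫_ℝ = 0)
    (htrans : ∀ x, f x = 0 → ⟪ξ x, ∇ f x⟫_ℝ ≠ 0) :
    {x | f x = 0 ∧ ∃ lam : ℝ, ∇ V x + lam • ∇ f x = 0} =
      {x | f x = 0 ∧ ∇ V x = 0} := by
  ext x
  simp only [Set.mem_setOf_eq]
  constructor
  · rintro ⟨hfx, lam, hlam⟩
    refine ⟨hfx, ?_⟩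
    have h1 : ⟪ξ x, ∇ V x + lam • ∇ f x⟫_ℝ = 0 := by rw [hlam]; simp
    rw [inner_add_right, inner_smul_right, hsym] at h1
    have hlam0 : lam = 0 := by
      rw [zero_add] at h1
      rcases mul_eq_zero.mp h1 with h | h
      · exact h
      · exact absurd h (htrans x hfx)
    rw [hlam0, zero_smul, add_zero] at hlam
    exact hlam
  · rintro ⟨hfx, hV0⟩
    exact ⟨hfx, 0, by rw [hV0, zero_smul, add_zero]⟩
end

section
/- Let n ≥ 1, let F : (Fin n → ℝ) × ℝ → ℝ be differentiable with a symmetry vector field w : (Fin n → ℝ) × ℝ → (Fin n → ℝ) × ℝ satisfying ⟪w(p), ∇F(p)⟫ = 0 for all p, and let h : (Fin n → ℝ) → ℝ be differentiable with gauge-fixing function G(x, φ) = h(x) − φ. Suppose (x₀, y₀, λ) ∈ (Fin n → ℝ) × ℝ × ℝ is a critical point of the extended function (x, y, λ) ↦ F(x, y) + λ (h(x) − y), and suppose ⟪w(x₀, y₀), ∇G(x₀, y₀)⟫ ≠ 0. Then λ = 0, y₀ = h(x₀), and ∇F(x₀, y₀) = 0. -/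
/-!
The critical-point equations of `F + λ G` say `G = 0` and `dF + λ dG = 0`. Evaluating the
second one on the symmetry direction `w`, along which `dF` vanishes, leaves `λ ⟪w, ∇G⟫ = 0`,
so transversality forces `λ = 0`, and then `dF = 0`.
-/

open ContinuousLinearMap

section Lagrangian

variable {E : Type*} [NormedAddCommGroup E] [NormedSpace ℝ E] {f g : E → ℝ} {p : E} {lam : ℝ}

theorem hasFDerivAt_lagrangian_s5 (hf : DifferentiableAt ℝ f p) (hg : DifferentiableAt ℝ g p) :
    HasFDerivAt (fun q : E × ℝ => f q.1 + q.2 * g q.1)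
      ((fderiv ℝ f p + lam • fderiv ℝ g p).comp (fst ℝ E ℝ) + g p • snd ℝ E ℝ) (p, lam) := by
  have hfq := hf.hasFDerivAt.comp (p, lam) (hasFDerivAt_fst (𝕜 := ℝ))
  have hgq := hg.hasFDerivAt.comp (p, lam) (hasFDerivAt_fst (𝕜 := ℝ))
  refine (hfq.add (hasFDerivAt_snd.mul hgq)).congr_fderiv ?_
  ext <;> simp

theorem fderiv_lagrangian_eq_zero_iff (hf : DifferentiableAt ℝ f p)
    (hg : DifferentiableAt ℝ g p) :
    fderiv ℝ (fun q : E × ℝ => f q.1 + q.2 * g q.1) (p, lam) = 0 ↔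
      fderiv ℝ f p + lam • fderiv ℝ g p = 0 ∧ g p = 0 := by
  rw [(hasFDerivAt_lagrangian_s5 hf hg).fderiv]
  constructor
  · intro h
    refine ⟨ext fun v => ?_, ?_⟩
    · simpa using congr($h (v, 0))
    · simpa using congr($h (0, 1))
  · rintro ⟨hstat, hconstr⟩
    simp [hstat, hconstr]

theorem eq_zero_of_add_smul_eq_zero_of_transverse {A B : E →L[ℝ] ℝ} {v : E} (hAv : A v = 0)
    (hBv : B v ≠ 0) (h : A + lam • B = 0) : lam = 0 ∧ A = 0 := by
  have hlam : lam * B v = 0 := by simpa [hAv] using congr($h v)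
  have hlam : lam = 0 := (mul_eq_zero.mp hlam).resolve_right hBv
  exact ⟨hlam, by simpa [hlam] using h⟩

end Lagrangian

theorem lagrange_multiplier_vanishes_on_shell_general
    (n : ℕ)
    (F : ((Fin n → ℝ) × ℝ) → ℝ) (hF : Differentiable ℝ F)
    (w : ((Fin n → ℝ) × ℝ) → ((Fin n → ℝ) × ℝ))
    (hsym : ∀ p, fderiv ℝ F p (w p) = 0)
    (h : (Fin n → ℝ) → ℝ) (hh : Differentiable ℝ h)
    (G : ((Fin n → ℝ) × ℝ) → ℝ) (hG : G = fun p => h p.1 - p.2)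
    (x₀ : Fin n → ℝ) (y₀ lam : ℝ)
    (hcrit : fderiv ℝ
        (fun p : ((Fin n → ℝ) × ℝ) × ℝ => F p.1 + p.2 * (h p.1.1 - p.1.2))
        ((x₀, y₀), lam) = 0)
    (htrans : fderiv ℝ G (x₀, y₀) (w (x₀, y₀)) ≠ 0) :
    lam = 0 ∧ y₀ = h x₀ ∧ fderiv ℝ F (x₀, y₀) = 0 := by
  subst hG
  have hGdiff : DifferentiableAt ℝ (fun p : (Fin n → ℝ) × ℝ => h p.1 - p.2) (x₀, y₀) := by
    fun_prop
  obtain ⟨hstat, hconstr⟩ := (fderiv_lagrangian_eq_zero_iff (hF _) hGdiff).mp hcrit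
  obtain ⟨hlam, hF₀⟩ := eq_zero_of_add_smul_eq_zero_of_transverse (hsym _) htrans hstat
  exact ⟨hlam, (sub_eq_zero.mp hconstr).symm, hF₀⟩

/-- Finite-dimensional form of the paper's claim that the Lagrange multiplier
enforcing a derivative-free gauge fixing vanishes on-shell: let `F` be a
differentiable "action" on `(Fin n → ℝ) × ℝ` with a symmetry vector field `w`
(the directional derivative of `F` along `w`, i.e. `⟪w(p), ∇F(p)⟫`, vanishes
everywhere) and let `G(x, φ) = h(x) - φ` be the gauge-fixing function. If
`(x₀, y₀, λ)` is a critical point of the extended function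
`(x, y, λ) ↦ F(x, y) + λ (h(x) - y)` and the symmetry is transverse to the gauge
fixing at `(x₀, y₀)` (i.e. `⟪w(x₀, y₀), ∇G(x₀, y₀)⟫ ≠ 0`), then `λ = 0`,
`y₀ = h(x₀)`, and `(x₀, y₀)` is an unconstrained critical point of `F`
(`∇F(x₀, y₀) = 0`, equivalently its Fréchet derivative vanishes there). -/
theorem lagrange_multiplier_vanishes_on_shell
    (n : ℕ) (hn : 1 ≤ n)
    (F : ((Fin n → ℝ) × ℝ) → ℝ) (hF : Differentiable ℝ F)
    (w : ((Fin n → ℝ) × ℝ) → ((Fin n → ℝ) × ℝ))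
    (hsym : ∀ p, fderiv ℝ F p (w p) = 0)
    (h : (Fin n → ℝ) → ℝ) (hh : Differentiable ℝ h)
    (G : ((Fin n → ℝ) × ℝ) → ℝ) (hG : G = fun p => h p.1 - p.2)
    (x₀ : Fin n → ℝ) (y₀ lam : ℝ)
    (hcrit : fderiv ℝ
        (fun p : ((Fin n → ℝ) × ℝ) × ℝ => F p.1 + p.2 * (h p.1.1 - p.1.2))
        ((x₀, y₀), lam) = 0)
    (htrans : fderiv ℝ G (x₀, y₀) (w (x₀, y₀)) ≠ 0) :
    lam = 0 ∧ y₀ = h x₀ ∧ fderiv ℝ F (x₀, y₀) = 0 :=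
  lagrange_multiplier_vanishes_on_shell_general n F hF w hsym h hh G hG x₀ y₀ lam hcrit htrans
end
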